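/- In an effect algebra satisfying the ACC, for every element c of a ⇒ b (where a ⇒ b := {a'+d | d ∈ Max L(a,b)}) there exists an element e of a → b := Max{x | x⊙a defined and x⊙a ≤ b} with c ≤ e; i.e., a ⇒ b ≤₁ a → b. -/
import Mathlib


structure EffectAlgebra (E : Type*) where
  add : E → E → Option E
  zero : E
  one : E
  supp : E → E
  comm : ∀ a b, add a b = add b a
  assoc : ∀ a b c ab abc, add a b = some ab → add ab c = some abc →
    ∃ bc, add b c = some bc ∧ add a bc = some abc
  add_supp : ∀ a, add a (supp a) = some one
  supp_unique : ∀ a b, add a b = some one → b = supp a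
  one_def : ∀ a b, add a one = some b → a = zero

namespace EffectAlgebra

variable {E : Type*}

/-- induced order: a ≤ b iff ∃ c, a+c = b -/
def le (A : EffectAlgebra E) (a b : E) : Prop := ∃ c, A.add a c = some b

/-- a ⊙ b := (a'+b')' -/
def dot (A : EffectAlgebra E) (a b : E) : Option E :=
  (A.add (A.supp a) (A.supp b)).map A.supp

/-- ascending chain condition: every ascending sequence repeats -/
def ACC (A : EffectAlgebra E) : Prop :=
  ∀ f : ℕ → E, (∀ n, A.le (f n) (f (n + 1))) → ∃ n, f n = f (n + 1)

/-- {x | x ⊙ b defined and x ⊙ b ≤ c} -/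
def impSet (A : EffectAlgebra E) (b c : E) : Set E :=
  {x | ∃ d, A.dot x b = some d ∧ A.le d c}

/-- unsharp implication b → c := Max of impSet -/
def arrow (A : EffectAlgebra E) (b c : E) : Set E :=
  {x | x ∈ A.impSet b c ∧ ∀ y ∈ A.impSet b c, A.le x y → x = y}

/-- common lower bounds -/
def lb (A : EffectAlgebra E) (a b : E) : Set E :=
  {x | A.le x a ∧ A.le x b}

/-- Max L(a,b) -/
def maxLb (A : EffectAlgebra E) (a b : E) : Set E :=
  {x | x ∈ A.lb a b ∧ ∀ y ∈ A.lb a b, A.le x y → x = y}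

/-- a ⇒ b := a' + Max L(a,b) elementwise -/
def darr (A : EffectAlgebra E) (a b : E) : Set E :=
  {e | ∃ d ∈ A.maxLb a b, A.add (A.supp a) d = some e}

end EffectAlgebra

open EffectAlgebra

namespace EffectAlgebra

variable {E : Type*}

lemma supp_supp (A : EffectAlgebra E) (a : E) : A.supp (A.supp a) = a :=
  (A.supp_unique (A.supp a) a ((A.comm _ _) ▸ A.add_supp a)).symm

lemma supp_one (A : EffectAlgebra E) : A.supp A.one = A.zero :=
  A.one_def _ _ ((A.comm _ _) ▸ A.add_supp A.one)

lemma add_supp_zero (A : EffectAlgebra E) (a : E) :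
    A.add (A.supp a) A.zero = some (A.supp a) := by
  have h1 : A.add A.one A.zero = some A.one := by
    have := A.add_supp A.one
    rwa [A.supp_one] at this
  obtain ⟨bc, hbc, habc⟩ := A.assoc a (A.supp a) A.zero A.one A.one (A.add_supp a) h1
  have : bc = A.supp a := A.supp_unique a bc habc
  rwa [this] at hbc

lemma add_zero' (A : EffectAlgebra E) (a : E) : A.add a A.zero = some a := by
  have := A.add_supp_zero (A.supp a)
  rwa [A.supp_supp] at this

lemma le_refl' (A : EffectAlgebra E) (a : E) : A.le a a := ⟨A.zero, A.add_zero' a⟩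

lemma le_trans' (A : EffectAlgebra E) {a b c : E} (h1 : A.le a b) (h2 : A.le b c) :
    A.le a c := by
  obtain ⟨u, hu⟩ := h1
  obtain ⟨v, hv⟩ := h2
  obtain ⟨w, _, hw2⟩ := A.assoc a u v b c hu hv
  exact ⟨w, hw2⟩

lemma exists_max (A : EffectAlgebra E) (hACC : A.ACC) (S : Set E) {c : E} (hc : c ∈ S) :
    ∃ e, (e ∈ S ∧ ∀ y ∈ S, A.le e y → e = y) ∧ A.le c e := by
  by_contra hcon
  push_neg at hcon
  have key : ∀ x : {x : E // x ∈ S ∧ A.le c x}, ∃ y : {x : E // x ∈ S ∧ A.le c x},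
      A.le x.1 y.1 ∧ x.1 ≠ y.1 := by
    rintro ⟨x, hxS, hcx⟩
    have hnm : ¬ ∀ y ∈ S, A.le x y → x = y := fun h => hcon x ⟨hxS, h⟩ hcx
    push_neg at hnm
    obtain ⟨y, hyS, hxy, hne⟩ := hnm
    exact ⟨⟨y, hyS, A.le_trans' hcx hxy⟩, hxy, hne⟩
  choose g hg1 hg2 using key
  set f : ℕ → {x : E // x ∈ S ∧ A.le c x} := fun n => g^[n] ⟨c, hc, A.le_refl' c⟩ with hf
  have hstep : ∀ n, f (n + 1) = g (f n) := by
    intro n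
    simp only [hf, Function.iterate_succ_apply']
  have hasc : ∀ n, A.le ((f n).1) ((f (n + 1)).1) := by
    intro n
    rw [hstep n]
    exact hg1 (f n)
  obtain ⟨n, hn⟩ := hACC (fun n => (f n).1) hasc
  exact hg2 (f n) (by rw [← hstep n]; exact hn)

end EffectAlgebra

theorem stmt19 {E : Type*} (A : EffectAlgebra E) (hACC : A.ACC) (a b : E) :
    ∀ c ∈ A.darr a b, ∃ e ∈ A.arrow a b, A.le c e := by
  rintro c ⟨d, ⟨⟨⟨t, ht⟩, hdb⟩, _⟩, hadd⟩
  -- ht : A.add d t = some a, hdb : A.le d b, hadd : A.add (A.supp a) d = some c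
  -- First: t = supp c
  have haa : A.add a (A.supp a) = some A.one := A.add_supp a
  -- add t (supp a) : from assoc (d, t, supp a)
  obtain ⟨s, hs, hds⟩ := A.assoc d t (A.supp a) a A.one ht haa
  -- hs : add t (supp a) = some s, hds : add d s = 1, so s = supp d
  have hsd : s = A.supp d := A.supp_unique d s hds
  -- add t c = 1 : from assoc (t, d, supp a)
  obtain ⟨bc, hbc, htbc⟩ := A.assoc t d (A.supp a) a A.one ((A.comm t d) ▸ ht) haa
  -- hbc : add d (supp a) = some bc, htbc : add t bc = 1
  have hbcc : bc = c := by
    rw [A.comm d (A.supp a)] at hbc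
    rw [hadd] at hbc
    exact (Option.some_inj.mp hbc).symm
  rw [hbcc] at htbc
  have hct : A.add c t = some A.one := (A.comm c t) ▸ htbc
  have hsuppc : t = A.supp c := A.supp_unique c t hct
  -- dot c a = some d
  have hdot : A.dot c a = some d := by
    unfold EffectAlgebra.dot
    rw [← hsuppc, hs, hsd]
    simp [A.supp_supp]
  have hcimp : c ∈ A.impSet a b := ⟨d, hdot, hdb⟩
  obtain ⟨e, ⟨heS, hemax⟩, hce⟩ := A.exists_max hACC (A.impSet a b) hcimp
  exact ⟨e, ⟨heS, hemax⟩, hce⟩
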